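/- arXiv:1308.0877 — 2 statements merged into one kernel-verified Lean document; each statement's English description precedes it below -/
import Mathlib

section
/- Let m ≥ 2 and let x < m be a positive integer relatively prime to m, with Hirzebruch–Jung continued fraction expansion m/x = n_1 − 1/(n_2 − 1/(⋯ − 1/n_l)), all n_j ≥ 2. Let y < m be the unique positive integer with x·y ≡ 1 (mod m). Then the reversed sequence gives the Hirzebruch–Jung continued fraction expansion of m/y, that is, m/y = n_l − 1/(n_{l−1} − 1/(⋯ − 1/n_1)). -/
/-!
Encode the continued fraction `[n₁, …, n_l]` by the product `M` of the matrices
`!![nⱼ, -1; 1, 0]`. Its first column is `(m, x)`, and `det M = 1` forces the entry `-M 0 1`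
to be an inverse of `x` modulo `m`. Reversing the product amounts to transposing it after
conjugating by `diag(1, -1)`, which fixes each factor up to transposition; so the reversed
product has first column `(m, -M 0 1)`, and the size bounds valid for every such product
identify `-M 0 1` with `y`.
-/

/-- value of the Hirzebruch–Jung continued fraction `n₁ - 1/(n₂ - 1/(⋯ - 1/n_l))`
(the empty continued fraction has value `0`, and `1/0 = 0` in `ℚ` makes the
singleton case evaluate to `n₁`). -/
def hjEval : List ℤ → ℚ
  | [] => 0
  | n :: ns => (n : ℚ) - 1 / hjEval ns

open Matrix

def hjStep (n : ℤ) : Matrix (Fin 2) (Fin 2) ℤ := !![n, -1; 1, 0]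

def hjMatrix (ns : List ℤ) : Matrix (Fin 2) (Fin 2) ℤ := (ns.map hjStep).prod

@[simp]
lemma hjMatrix_nil : hjMatrix [] = 1 := rfl

lemma hjMatrix_cons (n : ℤ) (ns : List ℤ) : hjMatrix (n :: ns) = hjStep n * hjMatrix ns := rfl

lemma hjMatrix_append_singleton (ns : List ℤ) (n : ℤ) :
    hjMatrix (ns ++ [n]) = hjMatrix ns * hjStep n := by
  simp [hjMatrix]

lemma det_hjMatrix (ns : List ℤ) : (hjMatrix ns).det = 1 := by
  induction ns with
  | nil => simp
  | cons n ns ih => rw [hjMatrix_cons, det_mul, ih, hjStep, det_fin_two_of]; ring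

lemma hjMatrix_cons_apply_zero_zero (n : ℤ) (ns : List ℤ) :
    hjMatrix (n :: ns) 0 0 = n * hjMatrix ns 0 0 - hjMatrix ns 1 0 := by
  simp [hjMatrix_cons, hjStep, mul_apply, Fin.sum_univ_two]
  ring

lemma hjMatrix_cons_apply_one_zero (n : ℤ) (ns : List ℤ) :
    hjMatrix (n :: ns) 1 0 = hjMatrix ns 0 0 := by
  simp [hjMatrix_cons, hjStep, mul_apply, Fin.sum_univ_two]

def signFlip : Matrix (Fin 2) (Fin 2) ℤ := !![1, 0; 0, -1]

lemma signFlip_mul_signFlip : signFlip * signFlip = 1 := by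
  simp [signFlip, one_fin_two]

lemma signFlip_mul_signFlip_mul (A : Matrix (Fin 2) (Fin 2) ℤ) :
    signFlip * (signFlip * A) = A := by
  rw [← Matrix.mul_assoc, signFlip_mul_signFlip, Matrix.one_mul]

lemma transpose_signFlip_conj_hjStep (n : ℤ) :
    (signFlip * hjStep n * signFlip)ᵀ = hjStep n := by
  ext i j
  fin_cases i <;> fin_cases j <;> simp [signFlip, hjStep]

lemma hjMatrix_reverse (ns : List ℤ) :
    hjMatrix ns.reverse = (signFlip * hjMatrix ns * signFlip)ᵀ := by
  induction ns with
  | nil => rw [List.reverse_nil, hjMatrix_nil, Matrix.mul_one, signFlip_mul_signFlip, transpose_one]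
  | cons n ns ih =>
    rw [List.reverse_cons, hjMatrix_append_singleton, ih, hjMatrix_cons]
    calc (signFlip * hjMatrix ns * signFlip)ᵀ * hjStep n
        = (signFlip * hjMatrix ns * signFlip)ᵀ * (signFlip * hjStep n * signFlip)ᵀ := by
          rw [transpose_signFlip_conj_hjStep]
      _ = (signFlip * hjStep n * signFlip * (signFlip * hjMatrix ns * signFlip))ᵀ :=
          (transpose_mul _ _).symm
      _ = (signFlip * (hjStep n * hjMatrix ns) * signFlip)ᵀ := by
          simp only [Matrix.mul_assoc, signFlip_mul_signFlip_mul]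

lemma hjMatrix_reverse_apply_zero_zero (ns : List ℤ) :
    hjMatrix ns.reverse 0 0 = hjMatrix ns 0 0 := by
  rw [hjMatrix_reverse, transpose_apply]
  simp [signFlip, mul_apply, Fin.sum_univ_two, vecMul, dotProduct]

lemma hjMatrix_reverse_apply_one_zero (ns : List ℤ) :
    hjMatrix ns.reverse 1 0 = -hjMatrix ns 0 1 := by
  rw [hjMatrix_reverse, transpose_apply]
  simp [signFlip, mul_apply, Fin.sum_univ_two, vecMul, dotProduct]

lemma hjMatrix_one_zero_mem_Ico {ns : List ℤ} (hns : ∀ n ∈ ns, 2 ≤ n) :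
    hjMatrix ns 1 0 ∈ Set.Ico 0 (hjMatrix ns 0 0) := by
  induction ns with
  | nil => simp
  | cons n ns ih =>
    obtain ⟨hn, hns⟩ := List.forall_mem_cons.mp hns
    obtain ⟨hc, hca⟩ := ih hns
    rw [hjMatrix_cons_apply_zero_zero, hjMatrix_cons_apply_one_zero]
    constructor <;> nlinarith

lemma hjEval_eq_div {ns : List ℤ} (hns : ∀ n ∈ ns, 2 ≤ n) :
    hjEval ns = (hjMatrix ns 0 0 : ℚ) / hjMatrix ns 1 0 := by
  induction ns with
  | nil => simp [hjEval]
  | cons n ns ih =>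
    obtain ⟨-, hns⟩ := List.forall_mem_cons.mp hns
    obtain ⟨hc, hca⟩ := hjMatrix_one_zero_mem_Ico hns
    have ha : (hjMatrix ns 0 0 : ℚ) ≠ 0 := by exact_mod_cast (hc.trans_lt hca).ne'
    rw [hjEval, ih hns, hjMatrix_cons_apply_zero_zero, hjMatrix_cons_apply_one_zero, one_div_div]
    push_cast
    field_simp

lemma Int.eq_of_mul_sub_one_dvd {m x y z : ℤ} (hxm : IsCoprime x m)
    (hy : m ∣ x * y - 1) (hz : m ∣ x * z - 1) (hym : y ∈ Set.Ico 0 m) (hzm : z ∈ Set.Ico 0 m) :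
    y = z := by
  have hyz : m ∣ y - z := hxm.symm.dvd_of_dvd_mul_left <| by
    simpa [mul_sub] using dvd_sub hy hz
  have := Int.eq_zero_of_abs_lt_dvd hyz <|
    abs_sub_lt_iff.mpr ⟨by linarith [hym.2, hzm.1], by linarith [hym.1, hzm.2]⟩
  omega

theorem hj_reverse_general (m x y : ℤ)
    (hx0 : 0 < x) (hcop : Int.gcd x m = 1)
    (hy0 : 0 < y) (hym : y < m) (hxy : m ∣ x * y - 1)
    (ns : List ℤ) (hns : ∀ n ∈ ns, 2 ≤ n) (hhj : hjEval ns = (m : ℚ) / (x : ℚ)) :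
    hjEval ns.reverse = (m : ℚ) / (y : ℚ) := by
  have hns_rev : ∀ n ∈ ns.reverse, 2 ≤ n := fun n hn => hns n (List.mem_reverse.mp hn)
  have hc0 := (hjMatrix_one_zero_mem_Ico hns).1
  have hb := hjMatrix_one_zero_mem_Ico hns_rev
  have hdet : hjMatrix ns 0 0 * hjMatrix ns 1 1 - hjMatrix ns 0 1 * hjMatrix ns 1 0 = 1 := by
    rw [← det_fin_two, det_hjMatrix]
  rw [hjEval_eq_div hns] at hhj
  rw [hjEval_eq_div hns_rev]
  rw [hjMatrix_reverse_apply_zero_zero, hjMatrix_reverse_apply_one_zero] at *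
  generalize hjMatrix ns = M at *
  have hc : M 1 0 ≠ 0 := by
    rintro hc
    rw [hc, Int.cast_zero, div_zero, eq_comm, div_eq_zero_iff] at hhj
    norm_cast at hhj
    omega
  have hac : IsCoprime (M 0 0) (M 1 0) := ⟨M 1 1, -M 0 1, by linear_combination hdet⟩
  obtain ⟨rfl, rfl⟩ : M 0 0 = m ∧ M 1 0 = x :=
    Rat.div_int_inj (by omega) hx0 (Int.isCoprime_iff_gcd_eq_one.mp hac) (Nat.Coprime.symm hcop) hhj
  rw [Int.eq_of_mul_sub_one_dvd (Int.isCoprime_iff_gcd_eq_one.mpr hcop)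
    ⟨-M 1 1, by linear_combination hdet⟩ hxy hb ⟨hy0.le, hym⟩]

/-- Proposition 3.2: if `m/x = n₁ - 1/(n₂ - 1/(⋯ - 1/n_l))` is the Hirzebruch–Jung
continued fraction expansion and `y < m` is the unique positive integer with
`x y ≡ 1 (mod m)`, then `m/y = n_l - 1/(n_{l-1} - 1/(⋯ - 1/n₁))`. -/
theorem hj_reverse (m x y : ℤ) (hm : 2 ≤ m)
    (hx0 : 0 < x) (hxm : x < m) (hcop : Int.gcd x m = 1)
    (hy0 : 0 < y) (hym : y < m) (hxy : m ∣ x * y - 1)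
    (ns : List ℤ) (hns : ∀ n ∈ ns, 2 ≤ n) (hhj : hjEval ns = (m : ℚ) / (x : ℚ)) :
    hjEval ns.reverse = (m : ℚ) / (y : ℚ) :=
  hj_reverse_general m x y hx0 hcop hy0 hym hxy ns hns hhj
end

section
/- Let v, w ∈ ℤ² be primitive vectors with ε = det(v, w) ≠ 0, let x be the unique non-negative integer less than |ε| such that P = (v, w)·[[1, −x],[0, |ε|]]^{−1} is a unimodular integer matrix, and (when |ε| ≥ 2) let |ε|/x = n_1 − 1/(n_2 − 1/(⋯ − 1/n_l)), all n_j ≥ 2, be the Hirzebruch–Jung continued fraction (with l = 0 when |ε| = 1). Define w_j = P·[[0,−1],[1,n_1]]⋯[[0,−1],[1,n_j]]·(1,0)ᵀ for 0 ≤ j ≤ l and w_{l+1} = P·[[0,−1],[1,n_1]]⋯[[0,−1],[1,n_l]]·(0,1)ᵀ. Then w_0 = v, w_{l+1} = w, and det(w_j, w_{j+1}) = ε/|ε| ∈ {+1, −1} for every j = 0, …, l; in particular the sequence w_0, w_1, …, w_{l+1} is unimodular. -/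
/-!
With `S(n) = hjMat n = [[0, -1], [1, n]]` we have `S(n) e₁ = e₂`, so `w_j` and `w_{j+1}` are the two
columns of `P S(n₁) ⋯ S(n_j)`, whose determinant is `det P = ε / |ε|`. It remains to see
`w_{l+1} = w`, i.e. `S(n₁) ⋯ S(n_l) e₂ = (-x, |ε|)`. The second column `(-q, p)` of the product
satisfies `0 ≤ q < p` and `p / q = n₁ - 1/(n₂ - ⋯)`, by induction on `l`; it is primitive because
the product is unimodular, and `(-x, |ε|)` is primitive because `w = P (-x, |ε|)` is. Two
reduced fractions with the same value coincide.
-/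

/-- determinant of the 2×2 matrix with columns `v` and `w` -/
def det2 (v w : Fin 2 → ℤ) : ℤ := v 0 * w 1 - v 1 * w 0

/-- the 2×2 matrix with columns `v` and `w` -/
def colMat (v w : Fin 2 → ℤ) : Matrix (Fin 2) (Fin 2) ℤ := !![v 0, w 0; v 1, w 1]

/-- a 2×2 integer matrix is unimodular if its determinant is `±1` -/
def Unimod (A : Matrix (Fin 2) (Fin 2) ℤ) : Prop := A.det = 1 ∨ A.det = -1

/-- a vector of `ℤ²` is primitive if its components are relatively prime -/
def Primitive (v : Fin 2 → ℤ) : Prop := Int.gcd (v 0) (v 1) = 1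

/-- The vectors `w_j` of (4.2): for `0 ≤ j ≤ l`,
`w_j = P·[[0,-1],[1,n₁]]⋯[[0,-1],[1,n_j]]·(1,0)ᵀ`, and for `j = l + 1`,
`w_{l+1} = P·[[0,-1],[1,n₁]]⋯[[0,-1],[1,n_l]]·(0,1)ᵀ`. -/
def chainVec (P : Matrix (Fin 2) (Fin 2) ℤ) (ns : List ℤ) (j : ℕ) : Fin 2 → ℤ :=
  if j ≤ ns.length then
    (P * ((ns.take j).map fun n => !![0, -1; 1, n]).prod).mulVec ![1, 0]
  else
    (P * (ns.map fun n => !![0, -1; 1, n]).prod).mulVec ![0, 1]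

open Matrix

abbrev hjMat (n : ℤ) : Matrix (Fin 2) (Fin 2) ℤ := !![0, -1; 1, n]

def hjProd (ns : List ℤ) : Matrix (Fin 2) (Fin 2) ℤ := (ns.map hjMat).prod

@[simp] lemma det_hjMat (n : ℤ) : (hjMat n).det = 1 := by
  simp [det_fin_two_of]

@[simp] lemma hjMat_mulVec_e1 (n : ℤ) : hjMat n *ᵥ ![1, 0] = ![0, 1] := by
  ext i; fin_cases i <;> simp

@[simp] lemma hjProd_nil : hjProd [] = 1 := rfl

lemma hjProd_cons (n : ℤ) (ns : List ℤ) : hjProd (n :: ns) = hjMat n * hjProd ns := rfl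

@[simp] lemma det_hjProd (ns : List ℤ) : (hjProd ns).det = 1 := by
  induction ns with
  | nil => simp
  | cons n ns ih => rw [hjProd_cons, det_mul, ih, det_hjMat, mul_one]

lemma hjProd_take_succ {ns : List ℤ} {j : ℕ} (hj : j < ns.length) :
    hjProd (ns.take (j + 1)) = hjProd (ns.take j) * hjMat ns[j] := by
  rw [hjProd, hjProd, List.take_add_one, List.getElem?_eq_getElem hj]
  simp only [Option.toList_some, List.map_append, List.prod_append, List.map_singleton,
    List.prod_singleton]

lemma det2_mulVec_e1_e2 (A : Matrix (Fin 2) (Fin 2) ℤ) :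
    det2 (A *ᵥ ![1, 0]) (A *ᵥ ![0, 1]) = A.det := by
  simp [det2, det_fin_two, mulVec, dotProduct, Fin.sum_univ_two]
  ring

lemma det_colMat (v w : Fin 2 → ℤ) : (colMat v w).det = det2 v w := by
  simp [colMat, det2, det_fin_two_of, mul_comm]

lemma columns_of_mul_eq_colMat {P : Matrix (Fin 2) (Fin 2) ℤ} {x d : ℤ} {v w : Fin 2 → ℤ}
    (h : P * !![1, -x; 0, d] = colMat v w) :
    P *ᵥ ![1, 0] = v ∧ P *ᵥ ![-x, d] = w ∧ P.det * d = det2 v w := by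
  have hcol (u : Fin 2 → ℤ) : P *ᵥ (!![1, -x; 0, d] *ᵥ u) = colMat v w *ᵥ u := by
    rw [mulVec_mulVec, h]
  refine ⟨?_, ?_, by simpa [det_colMat] using congrArg det h⟩
  · rw [show ![1, 0] = !![1, -x; 0, d] *ᵥ ![1, 0] by ext i; fin_cases i <;> simp, hcol]
    ext i; fin_cases i <;> simp [colMat]
  · rw [show ![-x, d] = !![1, -x; 0, d] *ᵥ ![0, 1] by ext i; fin_cases i <;> simp, hcol]
    ext i; fin_cases i <;> simp [colMat]

lemma Int.ediv_abs_eq_one_or_neg_one {a : ℤ} (ha : a ≠ 0) : a / |a| = 1 ∨ a / |a| = -1 := by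
  rw [← Int.sign_eq_ediv_abs']
  rcases ha.lt_or_gt with h | h
  · exact Or.inr (Int.sign_eq_neg_one_of_neg h)
  · exact Or.inl (Int.sign_eq_one_of_pos h)

/-- For the empty list `(p, q) = (1, 0)`, and `hjEval [] = 1 / 0` holds through `x / 0 = 0`. -/
lemma hjProd_mulVec_e2 {ns : List ℤ} (hns : ∀ n ∈ ns, 2 ≤ n) :
    ∃ p q : ℤ, hjProd ns *ᵥ ![0, 1] = ![-q, p] ∧ 0 ≤ q ∧ q < p ∧ hjEval ns = p / q := by
  induction ns with
  | nil => exact ⟨1, 0, by simp, le_rfl, one_pos, by simp [hjEval]⟩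
  | cons n ns ih =>
    obtain ⟨p, q, hpq, hq, hqp, hval⟩ := ih fun m hm => hns m (List.mem_cons_of_mem n hm)
    have hn : 2 ≤ n := hns n List.mem_cons_self
    refine ⟨n * p - q, p, ?_, by omega, by nlinarith, ?_⟩
    · rw [hjProd_cons, ← mulVec_mulVec, hpq]
      ext i; fin_cases i <;> simp [mulVec, dotProduct, Fin.sum_univ_two]; ring
    · have hp : (p : ℚ) ≠ 0 := by exact_mod_cast (by omega : p ≠ 0)
      rw [hjEval, hval]
      push_cast
      field_simp

lemma Primitive.of_mulVec {A : Matrix (Fin 2) (Fin 2) ℤ} {u : Fin 2 → ℤ}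
    (h : Primitive (A *ᵥ u)) : Primitive u := by
  have hdvd : ∀ i, (Int.gcd (u 0) (u 1) : ℤ) ∣ (A *ᵥ u) i := fun i => by
    simp only [mulVec, dotProduct, Fin.sum_univ_two]
    exact dvd_add (dvd_mul_of_dvd_right (Int.gcd_dvd_left _ _) _)
      (dvd_mul_of_dvd_right (Int.gcd_dvd_right _ _) _)
  exact Nat.eq_one_of_dvd_one (h ▸ Int.dvd_gcd (hdvd 0) (hdvd 1))

lemma Primitive.mulVec {A : Matrix (Fin 2) (Fin 2) ℤ} {u : Fin 2 → ℤ} (hA : IsUnit A.det)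
    (h : Primitive u) : Primitive (A *ᵥ u) :=
  Primitive.of_mulVec (A := A⁻¹) (by rwa [mulVec_mulVec, nonsing_inv_mul A hA, one_mulVec])

lemma Primitive.coprime {p q : ℤ} (h : Primitive ![-q, p]) : p.natAbs.Coprime q.natAbs := by
  have h' : Int.gcd p q = 1 := by simpa [Primitive, Int.neg_gcd, Int.gcd_comm] using h
  exact h'

lemma hjProd_mulVec_e2_eq {ns : List ℤ} {a b : ℤ} (hns : ∀ n ∈ ns, 2 ≤ n) (ha : 0 < a)
    (hb : 0 < b) (hab : Primitive ![-b, a]) (hval : hjEval ns = a / b) :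
    hjProd ns *ᵥ ![0, 1] = ![-b, a] := by
  obtain ⟨p, q, hpq, hq, -, hval'⟩ := hjProd_mulVec_e2 hns
  have hpq_prim : Primitive ![-q, p] :=
    hpq ▸ Primitive.mulVec (by simp) (by simp [Primitive])
  have hq' : 0 < q := by
    refine lt_of_le_of_ne hq fun hq0 => ?_
    have : (0 : ℚ) < a / b := by positivity
    rw [← hval, hval', ← hq0, Int.cast_zero, div_zero] at this
    exact lt_irrefl _ this
  obtain ⟨rfl, rfl⟩ := Rat.div_int_inj hb hq' hab.coprime hpq_prim.coprime (hval ▸ hval')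
  exact hpq

section chainVec

variable (P : Matrix (Fin 2) (Fin 2) ℤ) {ns : List ℤ} {j : ℕ}

lemma chainVec_of_le (hj : j ≤ ns.length) :
    chainVec P ns j = (P * hjProd (ns.take j)) *ᵥ ![1, 0] := by
  rw [chainVec, if_pos hj, hjProd]

lemma chainVec_succ (hj : j ≤ ns.length) :
    chainVec P ns (j + 1) = (P * hjProd (ns.take j)) *ᵥ ![0, 1] := by
  rcases hj.lt_or_eq with hj | rfl
  · rw [chainVec_of_le P hj, hjProd_take_succ hj, ← mul_assoc, ← mulVec_mulVec,
      hjMat_mulVec_e1]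
  · rw [chainVec, if_neg (Nat.lt_irrefl _ ∘ Nat.lt_of_succ_le), List.take_length, hjProd]

lemma det2_chainVec_succ (hj : j ≤ ns.length) :
    det2 (chainVec P ns j) (chainVec P ns (j + 1)) = P.det := by
  rw [chainVec_of_le P hj, chainVec_succ P hj, det2_mulVec_e1_e2, det_mul, det_hjProd, mul_one]

end chainVec

theorem chain_is_unimodular_general (v w : Fin 2 → ℤ) (hw : Primitive w)
    (hε : det2 v w ≠ 0)
    (x : ℤ) (hx0 : 0 ≤ x) (hx1 : x < |det2 v w|)
    (P : Matrix (Fin 2) (Fin 2) ℤ)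
    (hPeq : P * !![1, -x; 0, |det2 v w|] = colMat v w)
    (ns : List ℤ)
    (hns1 : |det2 v w| = 1 → ns = [])
    (hns2 : 2 ≤ |det2 v w| → (∀ n ∈ ns, 2 ≤ n) ∧
      hjEval ns = ((|det2 v w| : ℤ) : ℚ) / (x : ℚ)) :
    chainVec P ns 0 = v ∧ chainVec P ns (ns.length + 1) = w ∧
    (det2 v w / |det2 v w| = 1 ∨ det2 v w / |det2 v w| = -1) ∧
    ∀ j ≤ ns.length,
      det2 (chainVec P ns j) (chainVec P ns (j + 1)) = det2 v w / |det2 v w| := by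
  set ε := det2 v w
  obtain ⟨hv', hw', hdetP⟩ := columns_of_mul_eq_colMat hPeq
  have hsecond : hjProd ns *ᵥ ![0, 1] = ![-x, |ε|] := by
    rcases (show 1 ≤ |ε| from abs_pos.mpr hε).eq_or_lt with h1 | h2
    · rw [hns1 h1.symm, ← h1, show x = 0 by omega]
      simp
    · obtain ⟨hns, hval⟩ := hns2 h2
      have hprim : Primitive ![-x, |ε|] := Primitive.of_mulVec (hw' ▸ hw)
      have hx : x ≠ 0 := by
        rintro rfl
        simp [Primitive] at hprim
        omega
      exact hjProd_mulVec_e2_eq hns (by omega) (by omega) hprim hval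
  have hdet : P.det = ε / |ε| :=
    (Int.ediv_eq_of_eq_mul_left (abs_ne_zero.mpr hε) hdetP.symm).symm
  refine ⟨?_, ?_, Int.ediv_abs_eq_one_or_neg_one hε, fun j hj => ?_⟩
  · rwa [chainVec_of_le P (Nat.zero_le _), List.take_zero, hjProd_nil, mul_one]
  · rw [chainVec_succ P le_rfl, List.take_length, ← mulVec_mulVec, hsecond, hw']
  · rw [det2_chainVec_succ P hj, hdet]

/-- The sequence `w_0 = v, w_1, …, w_{l+1} = w` obtained from the Hirzebruch–Jung
expansion of `|ε|/x` is unimodular, with all consecutive determinants equal to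
`ε/|ε| ∈ {±1}`. -/
theorem chain_is_unimodular (v w : Fin 2 → ℤ) (hv : Primitive v) (hw : Primitive w)
    (hε : det2 v w ≠ 0)
    (x : ℤ) (hx0 : 0 ≤ x) (hx1 : x < |det2 v w|)
    (P : Matrix (Fin 2) (Fin 2) ℤ)
    (hP : Unimod P) (hPeq : P * !![1, -x; 0, |det2 v w|] = colMat v w)
    (ns : List ℤ)
    (hns1 : |det2 v w| = 1 → ns = [])
    (hns2 : 2 ≤ |det2 v w| → (∀ n ∈ ns, 2 ≤ n) ∧
      hjEval ns = ((|det2 v w| : ℤ) : ℚ) / (x : ℚ)) :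
    chainVec P ns 0 = v ∧ chainVec P ns (ns.length + 1) = w ∧
    (det2 v w / |det2 v w| = 1 ∨ det2 v w / |det2 v w| = -1) ∧
    ∀ j ≤ ns.length,
      det2 (chainVec P ns j) (chainVec P ns (j + 1)) = det2 v w / |det2 v w| :=
  chain_is_unimodular_general v w hw hε x hx0 hx1 P hPeq ns hns1 hns2
end
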